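/- arXiv:2012.04453 — 2 statements merged into one kernel-verified Lean document; each statement's English description precedes it below -/
import Mathlib

section
/- Let N ≥ 3 and T > 0, and let ξ : [0,T] → ℝ^N be continuous. Define F(x) = ∫₀^T (4π(T-t))^{-N/2} exp(-|x - ξ(t)|²/(4(T-t))) dt. Then there exists a constant C > 0, depending only on N, such that ∫_{B^r(T)} F(x) dx ≤ C r² for all r > 0. -/
/-! By Tonelli, the integral of `F` over the ball `B` is at most the integral over the time lag
`s = T - t > 0` of the heat-kernel mass in `B`. That mass is at most `1` (the kernel is a
probability density) and at most `(4πs)^(-N/2) |B| = c r^N s^(-N/2)` (its sup bound). Using the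
first bound for `s ≤ r²` and the second for `s > r²` gives
`r² + c r^N ∫_{r²}^∞ s^(-N/2) ds = (1 + c / (N/2 - 1)) r²`, finite because `N/2 > 1`. -/

open MeasureTheory Set
open Real Module Metric
open scoped ENNReal

theorem ofReal_integral_le_lintegral_ofReal {α : Type*} [MeasurableSpace α] {μ : Measure α}
    (f : α → ℝ) : ENNReal.ofReal (∫ x, f x ∂μ) ≤ ∫⁻ x, ENNReal.ofReal (f x) ∂μ := by
  by_cases hf : Integrable f μ
  · rw [integral_eq_lintegral_pos_part_sub_lintegral_neg_part hf]
    calc ENNReal.ofReal ((∫⁻ x, .ofReal (f x) ∂μ).toReal - (∫⁻ x, .ofReal (-f x) ∂μ).toReal)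
        ≤ ENNReal.ofReal (∫⁻ x, .ofReal (f x) ∂μ).toReal :=
          ENNReal.ofReal_le_ofReal (sub_le_self _ ENNReal.toReal_nonneg)
      _ ≤ ∫⁻ x, .ofReal (f x) ∂μ := ENNReal.ofReal_toReal_le
  · simp [integral_undef hf]

theorem lintegral_Iio_comp_sub_left (f : ℝ → ℝ≥0∞) (T : ℝ) :
    ∫⁻ t in Iio T, f (T - t) = ∫⁻ s in Ioi 0, f s := by
  have := (Measure.measurePreserving_sub_left volume T).setLIntegral_comp_preimage_emb
    (Homeomorph.subLeft T).measurableEmbedding f (Ioi 0)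
  rwa [preimage_const_sub_Ioi, sub_zero] at this

theorem setLIntegral_Ioi_min_one_rpow_le {α ρ : ℝ} (hα : 1 < α) (hρ : 0 < ρ) (b : ℝ≥0∞) :
    ∫⁻ s in Ioi 0, min 1 (b * ENNReal.ofReal (s ^ (-α)))
      ≤ ENNReal.ofReal ρ + b * ENNReal.ofReal (ρ ^ (1 - α) / (α - 1)) := by
  have htail : ∫⁻ s in Ioi ρ, ENNReal.ofReal (s ^ (-α))
      = ENNReal.ofReal (ρ ^ (1 - α) / (α - 1)) := by
    rw [← ofReal_integral_eq_lintegral_ofReal (integrableOn_Ioi_rpow_of_lt (by linarith) hρ)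
      ((ae_restrict_iff' measurableSet_Ioi).2 (ae_of_all _ fun s hs ↦
        rpow_nonneg (hρ.trans hs).le _)), integral_Ioi_rpow_of_lt (by linarith) hρ]
    congr 1
    rw [show -α + 1 = 1 - α by ring, neg_div, ← div_neg, neg_sub]
  calc ∫⁻ s in Ioi 0, min 1 (b * ENNReal.ofReal (s ^ (-α)))
      = ∫⁻ s in Ioc 0 ρ ∪ Ioi ρ, min 1 (b * ENNReal.ofReal (s ^ (-α))) := by
        rw [Ioc_union_Ioi_eq_Ioi hρ.le]
    _ ≤ (∫⁻ s in Ioc 0 ρ, 1) + ∫⁻ s in Ioi ρ, b * ENNReal.ofReal (s ^ (-α)) :=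
        (lintegral_union_le _ _ _).trans
          (add_le_add (lintegral_mono fun _ ↦ min_le_left _ _)
            (lintegral_mono fun _ ↦ min_le_right _ _))
    _ = ENNReal.ofReal ρ + b * ENNReal.ofReal (ρ ^ (1 - α) / (α - 1)) := by
        rw [setLIntegral_one, Real.volume_Ioc, sub_zero, lintegral_const_mul _ (by fun_prop), htail]

noncomputable def heatKernel {V : Type*} [Norm V] (d : ℕ) (s : ℝ) (x : V) : ℝ :=
  (4 * π * s) ^ (-(d : ℝ) / 2) * exp (-‖x‖ ^ 2 / (4 * s))

section
variable {V : Type*} [Norm V]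

theorem heatKernel_nonneg (d : ℕ) {s : ℝ} (hs : 0 ≤ s) (x : V) : 0 ≤ heatKernel d s x := by
  unfold heatKernel; positivity

theorem heatKernel_le (d : ℕ) {s : ℝ} (hs : 0 < s) (x : V) :
    heatKernel d s x ≤ (4 * π) ^ (-(d : ℝ) / 2) * s ^ (-(d : ℝ) / 2) := by
  rw [← mul_rpow (by positivity) hs.le]
  refine mul_le_of_le_one_right (by positivity) (exp_le_one_iff.2 ?_)
  rw [neg_div]; exact neg_nonpos.2 (by positivity)

theorem heatKernel_eq (d : ℕ) (s : ℝ) (x : V) :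
    heatKernel d s x = (4 * π * s) ^ (-(d : ℝ) / 2) * exp (-(4 * s)⁻¹ * ‖x‖ ^ 2) := by
  rw [heatKernel]; ring_nf

end

noncomputable def heatPotential {V : Type*} [NormedAddCommGroup V] (d : ℕ) (ξ : ℝ → V) (T : ℝ)
    (x : V) : ℝ :=
  ∫ t in (0 : ℝ)..T, heatKernel d (T - t) (x - ξ t)

theorem measurable_heatKernel {V : Type*} [NormedAddCommGroup V] [MeasurableSpace V]
    [OpensMeasurableSpace V] (d : ℕ) :
    Measurable fun p : ℝ × V ↦ heatKernel d p.1 p.2 := by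
  unfold heatKernel; fun_prop

section
variable {V : Type*} [NormedAddCommGroup V] [InnerProductSpace ℝ V] [FiniteDimensional ℝ V]
  [MeasurableSpace V] [BorelSpace V]

theorem integral_heatKernel {s : ℝ} (hs : 0 < s) :
    ∫ x : V, heatKernel (finrank ℝ V) s x = 1 := by
  simp_rw [heatKernel_eq]
  rw [integral_const_mul,
    GaussianFourier.integral_rexp_neg_mul_sq_norm (inv_pos.2 (by positivity : 0 < 4 * s)),
    div_inv_eq_mul, ← mul_assoc, mul_comm π 4, ← rpow_add (by positivity), neg_div,
    neg_add_cancel, rpow_zero]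

theorem lintegral_heatKernel_sub {s : ℝ} (hs : 0 < s) (c : V) :
    ∫⁻ x, ENNReal.ofReal (heatKernel (finrank ℝ V) s (x - c)) = 1 := by
  have hint : Integrable (heatKernel (finrank ℝ V) s : V → ℝ) :=
    .of_integral_ne_zero (by rw [integral_heatKernel hs]; exact one_ne_zero)
  rw [← ofReal_integral_eq_lintegral_ofReal (hint.comp_sub_right c)
      (ae_of_all _ fun x ↦ heatKernel_nonneg _ hs.le _),
    integral_sub_right_eq_self (heatKernel _ s) c, integral_heatKernel hs, ENNReal.ofReal_one]

theorem setLIntegral_heatKernel_sub_le {s : ℝ} (hs : 0 < s) (c : V) (A : Set V) :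
    ∫⁻ x in A, ENNReal.ofReal (heatKernel (finrank ℝ V) s (x - c))
      ≤ min 1 (ENNReal.ofReal ((4 * π) ^ (-(finrank ℝ V : ℝ) / 2)) * volume A
        * ENNReal.ofReal (s ^ (-((finrank ℝ V : ℝ) / 2)))) := by
  refine le_min ((setLIntegral_le_lintegral _ _).trans_eq (lintegral_heatKernel_sub hs c)) ?_
  calc ∫⁻ x in A, ENNReal.ofReal (heatKernel (finrank ℝ V) s (x - c))
      ≤ ∫⁻ x in A, ENNReal.ofReal ((4 * π) ^ (-(finrank ℝ V : ℝ) / 2)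
          * s ^ (-(finrank ℝ V : ℝ) / 2)) :=
        lintegral_mono fun x ↦ ENNReal.ofReal_le_ofReal (heatKernel_le _ hs _)
    _ = _ := by
        rw [setLIntegral_const, ENNReal.ofReal_mul (by positivity), neg_div]
        ring

theorem ofReal_setIntegral_heatPotential_le {ξ : ℝ → V} {T : ℝ} (hT : 0 ≤ T)
    (hξ : AEMeasurable ξ (volume.restrict (Ioo 0 T))) (A : Set V) :
    ENNReal.ofReal (∫ x in A, heatPotential (finrank ℝ V) ξ T x)
      ≤ ∫⁻ s in Ioi 0, min 1 (ENNReal.ofReal ((4 * π) ^ (-(finrank ℝ V : ℝ) / 2)) * volume A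
        * ENNReal.ofReal (s ^ (-((finrank ℝ V : ℝ) / 2)))) := by
  set d := finrank ℝ V
  have hmeas : AEMeasurable (fun p : V × ℝ ↦ ENNReal.ofReal (heatKernel d (T - p.2) (p.1 - ξ p.2)))
      ((volume.restrict A).prod (volume.restrict (Ioo 0 T))) :=
    ((measurable_heatKernel d).comp_aemeasurable
      ((measurable_const.sub measurable_snd).aemeasurable.prodMk (measurable_fst.aemeasurable.sub
        (hξ.comp_quasiMeasurePreserving Measure.quasiMeasurePreserving_snd)))).ennreal_ofReal
  calc ENNReal.ofReal (∫ x in A, heatPotential d ξ T x)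
      ≤ ∫⁻ x in A, ENNReal.ofReal (heatPotential d ξ T x) := ofReal_integral_le_lintegral_ofReal _
    _ ≤ ∫⁻ x in A, ∫⁻ t in Ioo 0 T, ENNReal.ofReal (heatKernel d (T - t) (x - ξ t)) :=
        lintegral_mono fun x ↦ by
          rw [heatPotential, intervalIntegral.integral_of_le hT, integral_Ioc_eq_integral_Ioo]
          exact ofReal_integral_le_lintegral_ofReal _
    _ = ∫⁻ t in Ioo 0 T, ∫⁻ x in A, ENNReal.ofReal (heatKernel d (T - t) (x - ξ t)) :=
        lintegral_lintegral_swap hmeas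
    _ ≤ ∫⁻ t in Iio T, min 1 (ENNReal.ofReal ((4 * π) ^ (-(d : ℝ) / 2)) * volume A
          * ENNReal.ofReal ((T - t) ^ (-((d : ℝ) / 2)))) :=
        (setLIntegral_mono' measurableSet_Ioo fun t ht ↦
          setLIntegral_heatKernel_sub_le (sub_pos.2 ht.2) (ξ t) A).trans
        (lintegral_mono_set Ioo_subset_Iio_self)
    _ = _ := lintegral_Iio_comp_sub_left (fun s ↦ min 1 (ENNReal.ofReal ((4 * π) ^ (-(d : ℝ) / 2))
          * volume A * ENNReal.ofReal (s ^ (-((d : ℝ) / 2))))) T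

theorem setIntegral_heatPotential_closedBall_le (hd : 2 < finrank ℝ V) {ξ : ℝ → V} {T : ℝ}
    (hT : 0 ≤ T) (hξ : AEMeasurable ξ (volume.restrict (Ioo 0 T))) (y : V) {r : ℝ} (hr : 0 < r) :
    ∫ x in closedBall y r, heatPotential (finrank ℝ V) ξ T x
      ≤ (1 + (4 * π) ^ (-(finrank ℝ V : ℝ) / 2) * volume.real (ball (0 : V) 1)
        / ((finrank ℝ V : ℝ) / 2 - 1)) * r ^ 2 := by
  set d := finrank ℝ V
  set c₁ : ℝ := (4 * π) ^ (-(d : ℝ) / 2)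
  set κ : ℝ := volume.real (ball (0 : V) 1)
  have hα : 1 < (d : ℝ) / 2 := by
    rw [lt_div_iff₀ two_pos]; exact_mod_cast (by omega : 1 * 2 < d)
  have hα₀ : 0 < (d : ℝ) / 2 - 1 := sub_pos.2 hα
  have hvol : ENNReal.ofReal c₁ * volume (closedBall y r) = ENNReal.ofReal (c₁ * (r ^ d * κ)) := by
    rw [Measure.addHaar_closedBall volume _ hr.le, ENNReal.ofReal_mul (by positivity),
      ENNReal.ofReal_mul (by positivity), ofReal_measureReal measure_ball_lt_top.ne]
  have hpow : r ^ d * (r ^ 2) ^ (1 - (d : ℝ) / 2) = r ^ 2 := by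
    rw [← rpow_natCast, ← rpow_natCast r 2, ← rpow_mul hr.le, ← rpow_add hr]
    congr 1
    push_cast
    ring
  rw [← ENNReal.ofReal_le_ofReal_iff (by positivity)]
  refine (ofReal_setIntegral_heatPotential_le hT hξ _).trans
    ((setLIntegral_Ioi_min_one_rpow_le hα (pow_pos hr 2) _).trans_eq ?_)
  rw [hvol, ← ENNReal.ofReal_mul (by positivity),
    ← ENNReal.ofReal_add (by positivity) (by positivity)]
  congr 1
  linear_combination (c₁ * κ / ((d : ℝ) / 2 - 1)) * hpow

end

theorem stmt5 (N : ℕ) (hN : 3 ≤ N) :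
    -- the constant C depends only on N
    ∃ C > (0:ℝ), ∀ T : ℝ, 0 < T →
      ∀ ξ : ℝ → EuclideanSpace ℝ (Fin N), ContinuousOn ξ (Icc 0 T) →
        ∀ F : EuclideanSpace ℝ (Fin N) → ℝ,
          (∀ x, F x = ∫ t in (0:ℝ)..T,
            (4 * Real.pi * (T - t)) ^ (-(N : ℝ) / 2) *
              Real.exp (-‖x - ξ t‖ ^ 2 / (4 * (T - t)))) →
          ∀ r > (0:ℝ), ∫ x in Metric.closedBall (ξ T) r, F x ≤ C * r ^ 2 := by
  have hd : 2 < finrank ℝ (EuclideanSpace ℝ (Fin N)) := by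
    rw [finrank_euclideanSpace_fin]; omega
  have hα₀ : 0 < (N : ℝ) / 2 - 1 := by
    rw [sub_pos, lt_div_iff₀ two_pos]; exact_mod_cast (by omega : 1 * 2 < N)
  refine ⟨1 + (4 * π) ^ (-(N : ℝ) / 2) * volume.real (ball (0 : EuclideanSpace ℝ (Fin N)) 1)
    / ((N : ℝ) / 2 - 1), by positivity, fun T hT ξ hξ F hF r hr ↦ ?_⟩
  have hF' : F = heatPotential N ξ T := funext hF
  have hbound := setIntegral_heatPotential_closedBall_le hd hT.le
    ((hξ.mono Ioo_subset_Icc_self).aemeasurable measurableSet_Ioo) (ξ T) hr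
  rwa [finrank_euclideanSpace_fin, ← hF'] at hbound
end

section
/- Let N ≥ 1 and H > 0 with HN < 1, and let t > 0. Let (Ω, 𝒜, P) be a probability space and ξ : [0,∞) × Ω → ℝ^N a jointly measurable stochastic process. Let f : ℝ^N → [0,∞) be measurable with ‖f‖₁ = ∫_{ℝ^N} f < ∞. Assume that for every integer n ≥ 1 and all times 0 < t₁ < t₂ < ⋯ < t_n ≤ t (with t₀ = 0), E[f(ξ_{t₁}) ⋯ f(ξ_{t_n})] ≤ (2/π)^{nN/2} ‖f‖₁^n ∏_{j=1}^n (t_j - t_{j-1})^{-HN}. Then, setting Z_t = ∫₀^t f(ξ_s) ds and C₃ = (2/π)^{1/2} (1 - HN)^{-1} ‖f‖₁, one has E[Z_t^n] ≤ n! C₃^n t^{(1-HN)n} for every integer n ≥ 1. -/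
/-!
Expanding the `n`-th power by Tonelli, `E[Z_t^n]` is the integral over `(0, t]^n` of the symmetric
function `v ↦ E ∏ f(ξ_{v_j})`. Almost every `v` has distinct coordinates, so this is `n!` times the
integral over the ordered simplex `0 < v_1 < ⋯ < v_n ≤ t`, where the hypothesis bounds the integrand
by a product of powers of the increments `v_j - v_{j-1}`. The triangular change of variables
`v ↦ (v_j - v_{j-1})_j` has unit Jacobian, so the bound integrates to the `n`-th power of
`∫₀ᵗ x^{-HN} dx = t^{1-HN} / (1 - HN)`. Finally `(2/π)^{nN/2} ≤ (2/π)^{n/2}` because `N ≥ 1`.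
-/

open MeasureTheory Set Filter

/-- For a tuple `t = (t_1, …, t_n)`, `prevVal t j` is `t_{j-1}`, with the
convention `t_0 = 0`. -/
noncomputable def prevVal {n : ℕ} (t : Fin n → ℝ) (j : Fin n) : ℝ :=
  if _ : (j : ℕ) = 0 then 0
  else t ⟨(j : ℕ) - 1, Nat.lt_of_le_of_lt (Nat.sub_le _ _) j.isLt⟩

open scoped ENNReal

theorem lintegral_pi_prod_eq_pow {α : Type*} [MeasurableSpace α] (μ : Measure α) [SigmaFinite μ]
    {g : α → ℝ≥0∞} (hg : Measurable g) (n : ℕ) :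
    ∫⁻ v, ∏ j, g (v j) ∂Measure.pi (fun _ : Fin n => μ) = (∫⁻ x, g x ∂μ) ^ n := by
  induction n with
  | zero => simp
  | succ n ih =>
    have hprod : Measurable fun w : Fin n → α => ∏ j, g (w j) :=
      Finset.measurable_prod _ fun j _ => hg.comp (measurable_pi_apply j)
    have hmeas : Measurable fun p : α × (Fin n → α) => g p.1 * ∏ j, g (p.2 j) :=
      (hg.comp measurable_fst).mul (hprod.comp measurable_snd)
    calc ∫⁻ v, ∏ j, g (v j) ∂Measure.pi (fun _ : Fin (n + 1) => μ)
        = ∫⁻ p, g p.1 * ∏ j, g (p.2 j) ∂μ.prod (Measure.pi fun _ : Fin n => μ) := by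
          rw [← (measurePreserving_piFinSuccAbove (fun _ => μ) 0).lintegral_comp hmeas]
          simp [Fin.prod_univ_succ, MeasurableEquiv.piFinSuccAbove_apply, Fin.tail]
      _ = (∫⁻ x, g x ∂μ) ^ (n + 1) := by
          rw [lintegral_prod_mul hg.aemeasurable hprod.aemeasurable, ih, pow_succ']

theorem ae_injective_pi (n : ℕ) : ∀ᵐ v : Fin n → ℝ, Function.Injective v := by
  have hdiag : ∀ i j : Fin n, i ≠ j → volume {v : Fin n → ℝ | v i = v j} = 0 := by
    intro i j hij
    let L : (Fin n → ℝ) →ₗ[ℝ] ℝ :=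
      LinearMap.proj (R := ℝ) (φ := fun _ : Fin n => ℝ) i - LinearMap.proj j
    have hker : {v : Fin n → ℝ | v i = v j} = LinearMap.ker L := by
      ext v
      simp [L, sub_eq_zero]
    rw [hker]
    refine Measure.addHaar_submodule _ _ fun htop => ?_
    have hsingle : Pi.single i 1 ∈ LinearMap.ker L := htop ▸ Submodule.mem_top
    simp [L, hij] at hsingle
  have hsub : {v : Fin n → ℝ | ¬Function.Injective v} ⊆
      ⋃ (i) (j) (_ : i ≠ j), {v | v i = v j} := by
    intro v hv
    simp only [Function.Injective, not_forall] at hv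
    obtain ⟨i, j, hij, hne⟩ := hv
    simp only [mem_iUnion]
    exact ⟨i, j, hne, hij⟩
  exact measure_mono_null hsub (measure_iUnion_null fun i => measure_iUnion_null fun j =>
    measure_iUnion_null (hdiag i j))

theorem measurableSet_strictMono (n : ℕ) : MeasurableSet {v : Fin n → ℝ | StrictMono v} := by
  have hinter : {v : Fin n → ℝ | StrictMono v} = ⋂ (i) (j) (_ : i < j), {v | v i < v j} := by
    ext v
    simp [StrictMono]
  rw [hinter]
  exact .iInter fun i => .iInter fun j => .iInter fun _ =>
    measurableSet_lt (measurable_pi_apply i) (measurable_pi_apply j)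

theorem measurePreserving_comp_perm {n : ℕ} (σ : Equiv.Perm (Fin n)) :
    MeasurePreserving (fun v : Fin n → ℝ => v ∘ σ) := by
  have hcomp : (fun v : Fin n → ℝ => v ∘ σ) = MeasurableEquiv.piCongrLeft (fun _ => ℝ) σ.symm := by
    funext v i
    simpa using (MeasurableEquiv.piCongrLeft_apply_apply (β := fun _ => ℝ) σ.symm v (σ i)).symm
  rw [hcomp]
  exact volume_measurePreserving_piCongrLeft _ _

theorem lintegral_le_factorial_mul_setLIntegral_strictMono {n : ℕ} {F : (Fin n → ℝ) → ℝ≥0∞}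
    (hF : Measurable F) (hsymm : ∀ (σ : Equiv.Perm (Fin n)) v, F (v ∘ σ) = F v) :
    ∫⁻ v, F v ≤ n.factorial * ∫⁻ v in {v | StrictMono v}, F v := by
  set S := {v : Fin n → ℝ | StrictMono v}
  have hSF : Measurable (S.indicator F) := hF.indicator (measurableSet_strictMono n)
  have hsort : ∀ᵐ v : Fin n → ℝ, F v ≤ ∑ σ : Equiv.Perm (Fin n), S.indicator F (v ∘ σ) := by
    filter_upwards [ae_injective_pi n] with v hv
    have hσ : v ∘ Tuple.sort v ∈ S := (Tuple.monotone_sort v).strictMono_of_injective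
      (hv.comp (Tuple.sort v).injective)
    calc F v = S.indicator F (v ∘ Tuple.sort v) := by rw [indicator_of_mem hσ, hsymm]
      _ ≤ ∑ σ : Equiv.Perm (Fin n), S.indicator F (v ∘ σ) :=
          Finset.single_le_sum (f := fun σ : Equiv.Perm (Fin n) => S.indicator F (v ∘ σ))
            (fun _ _ => zero_le) (Finset.mem_univ _)
  calc ∫⁻ v, F v ≤ ∫⁻ v, ∑ σ : Equiv.Perm (Fin n), S.indicator F (v ∘ σ) :=
        lintegral_mono_ae hsort
    _ = ∑ σ : Equiv.Perm (Fin n), ∫⁻ v, S.indicator F (v ∘ σ) :=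
      lintegral_finsetSum _ fun σ _ => hSF.comp (measurePreserving_comp_perm σ).measurable
    _ = n.factorial * ∫⁻ v in S, F v := by
      simp only [(measurePreserving_comp_perm _).lintegral_comp hSF,
        Finset.sum_const, Finset.card_univ, Fintype.card_perm, Fintype.card_fin, nsmul_eq_mul]
      rw [lintegral_indicator (measurableSet_strictMono n)]

theorem measurable_prevVal {n : ℕ} (j : Fin n) :
    Measurable fun v : Fin n → ℝ => prevVal v j := by
  unfold prevVal
  split
  · exact measurable_const
  · exact measurable_pi_apply _

theorem prevVal_snoc_castSucc {n : ℕ} (w : Fin n → ℝ) (x : ℝ) (j : Fin n) :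
    prevVal (Fin.snoc w x : Fin (n + 1) → ℝ) j.castSucc = prevVal w j := by
  unfold prevVal
  split_ifs <;> simp_all [Fin.snoc, Nat.lt_of_le_of_lt (Nat.sub_le _ _) j.isLt]

theorem prevVal_snoc_last {n : ℕ} (w : Fin n → ℝ) (x : ℝ) :
    prevVal (Fin.snoc w x : Fin (n + 1) → ℝ) (Fin.last n) =
      if h : n = 0 then 0 else w ⟨n - 1, by omega⟩ := by
  unfold prevVal
  split_ifs <;> simp_all [Fin.snoc, Nat.pos_of_ne_zero]

theorem prevVal_lt_of_strictMono {n : ℕ} {v : Fin n → ℝ} (hv : StrictMono v)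
    (hpos : ∀ j, 0 < v j) (j : Fin n) : prevVal v j < v j := by
  unfold prevVal
  split
  · exact hpos j
  · exact hv (Fin.lt_def.2 (by simp only; omega))

theorem prevVal_nonneg {n : ℕ} {v : Fin n → ℝ} (hv : ∀ j, 0 ≤ v j) (j : Fin n) :
    0 ≤ prevVal v j := by
  unfold prevVal
  split
  · exact le_rfl
  · exact hv _

theorem lintegral_prod_sub_prevVal {h : ℝ → ℝ≥0∞} (hh : Measurable h) (n : ℕ) :
    ∫⁻ v : Fin n → ℝ, ∏ j, h (v j - prevVal v j) = (∫⁻ x, h x) ^ n := by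
  have hprod : ∀ m, Measurable fun w : Fin m → ℝ => ∏ j, h (w j - prevVal w j) := fun m =>
    Finset.measurable_prod _ fun j _ =>
      hh.comp ((measurable_pi_apply j).sub (measurable_prevVal j))
  induction n with
  | zero => simp [volume_pi]
  | succ n ih =>
    set last : (Fin n → ℝ) → ℝ := fun w => if h : n = 0 then 0 else w ⟨n - 1, by omega⟩
    have hlast : Measurable last := by
      simp only [last]
      split
      · exact measurable_const
      · exact measurable_pi_apply _
    have hmeas : Measurable fun p : ℝ × (Fin n → ℝ) =>
        (∏ j, h (p.2 j - prevVal p.2 j)) * h (p.1 - last p.2) :=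
      ((hprod n).comp measurable_snd).mul
        (hh.comp (measurable_fst.sub (hlast.comp measurable_snd)))
    calc ∫⁻ v : Fin (n + 1) → ℝ, ∏ j, h (v j - prevVal v j)
        = ∫⁻ p : ℝ × (Fin n → ℝ), (∏ j, h (p.2 j - prevVal p.2 j)) * h (p.1 - last p.2) := by
          rw [← (volume_preserving_piFinSuccAbove (fun _ => ℝ) (Fin.last n)).symm.lintegral_comp
            (hprod (n + 1))]
          congr with p
          have hsnoc : (MeasurableEquiv.piFinSuccAbove (fun _ => ℝ) (Fin.last n)).symm p =
              Fin.snoc p.2 p.1 := by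
            simp [MeasurableEquiv.piFinSuccAbove_symm_apply, Fin.snocEquiv]
          simp only [hsnoc, Fin.prod_univ_castSucc, Fin.snoc_castSucc, Fin.snoc_last,
            prevVal_snoc_castSucc, prevVal_snoc_last, last]
      _ = ∫⁻ w : Fin n → ℝ, (∏ j, h (w j - prevVal w j)) * ∫⁻ x, h x := by
          rw [Measure.volume_eq_prod, lintegral_prod_symm _ hmeas.aemeasurable]
          congr with w
          dsimp only
          have hshift : Measurable fun x => h (x - last w) := hh.comp (measurable_sub_const _)
          rw [lintegral_const_mul _ hshift, lintegral_sub_right_eq_self]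
      _ = (∫⁻ x, h x) ^ (n + 1) := by rw [lintegral_mul_const _ (hprod n), ih, pow_succ]

theorem lintegral_pow_lintegral_le_factorial_mul {Ω : Type*} [MeasurableSpace Ω]
    (P : Measure Ω) [SFinite P] {G : ℝ → Ω → ℝ≥0∞} (hG : Measurable (Function.uncurry G))
    {K : ℝ → ℝ≥0∞} (hK : Measurable K) (C : ℝ≥0∞) {n : ℕ}
    (hbound : ∀ v : Fin n → ℝ, StrictMono v →
      ∫⁻ ω, ∏ j, G (v j) ω ∂P ≤ C * ∏ j, K (v j - prevVal v j)) :
    ∫⁻ ω, (∫⁻ s, G s ω) ^ n ∂P ≤ n.factorial * C * (∫⁻ x, K x) ^ n := by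
  have hGω : ∀ ω, Measurable fun s => G s ω := fun ω =>
    hG.comp (measurable_id.prodMk measurable_const)
  have hprod : Measurable fun p : (Fin n → ℝ) × Ω => ∏ j, G (p.1 j) p.2 :=
    Finset.measurable_prod _ fun j _ =>
      show Measurable (Function.uncurry G ∘ fun p : (Fin n → ℝ) × Ω => (p.1 j, p.2)) from
        hG.comp (((measurable_pi_apply j).comp measurable_fst).prodMk measurable_snd)
  have hKprod : Measurable fun v : Fin n → ℝ => ∏ j, K (v j - prevVal v j) :=
    Finset.measurable_prod _ fun j _ =>
      hK.comp ((measurable_pi_apply j).sub (measurable_prevVal j))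
  calc ∫⁻ ω, (∫⁻ s, G s ω) ^ n ∂P
      = ∫⁻ ω, (∫⁻ v : Fin n → ℝ, ∏ j, G (v j) ω) ∂P := by
        simp only [volume_pi, lintegral_pi_prod_eq_pow _ (hGω _)]
    _ = ∫⁻ v : Fin n → ℝ, ∫⁻ ω, ∏ j, G (v j) ω ∂P :=
        lintegral_lintegral_swap <| by exact (hprod.comp measurable_swap).aemeasurable
    _ ≤ n.factorial * ∫⁻ v in {v | StrictMono v}, ∫⁻ ω, ∏ j, G (v j) ω ∂P :=
        lintegral_le_factorial_mul_setLIntegral_strictMono hprod.lintegral_prod_right'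
          fun σ v => lintegral_congr fun ω => Equiv.prod_comp σ fun j => G (v j) ω
    _ ≤ n.factorial * ∫⁻ v, C * ∏ j, K (v j - prevVal v j) := by
        refine mul_le_mul_right ?_ _
        exact (setLIntegral_mono (measurable_const.mul hKprod) hbound).trans
          (setLIntegral_le_lintegral _ _)
    _ = n.factorial * C * (∫⁻ x, K x) ^ n := by
        rw [lintegral_const_mul _ hKprod, lintegral_prod_sub_prevVal hK, mul_assoc]

theorem setLIntegral_Ioc_rpow_neg {a : ℝ} (ha : a < 1) {t : ℝ} (ht : 0 ≤ t) :
    ∫⁻ x in Ioc 0 t, ENNReal.ofReal (x ^ (-a)) = ENNReal.ofReal (t ^ (1 - a) / (1 - a)) := by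
  have hint : IntegrableOn (fun x : ℝ => x ^ (-a)) (Ioc 0 t) := by
    have := intervalIntegral.intervalIntegrable_rpow' (a := 0) (b := t) (r := -a) (by linarith)
    rwa [intervalIntegrable_iff, uIoc_of_le ht] at this
  rw [← ofReal_integral_eq_lintegral_ofReal hint
    ((ae_restrict_iff' measurableSet_Ioc).2 (.of_forall fun x hx => Real.rpow_nonneg hx.1.le _)),
    ← intervalIntegral.integral_of_le ht, integral_rpow (.inl (by linarith)),
    Real.zero_rpow (by linarith)]
  ring_nf

theorem lintegral_prod_indicator_le_of_strictMono {Ω : Type*} [MeasurableSpace Ω]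
    {P : Measure Ω} {Y : ℝ → Ω → ℝ} {a c t : ℝ} (hc : 0 ≤ c) {n : ℕ}
    (hmom : ∀ v : Fin n → ℝ, (∀ j, prevVal v j < v j) → (∀ j, v j ≤ t) →
      ∫⁻ ω, ∏ j, ENNReal.ofReal (Y (v j) ω) ∂P ≤
        ENNReal.ofReal (c * ∏ j, (v j - prevVal v j) ^ (-a)))
    {v : Fin n → ℝ} (hv : StrictMono v) :
    ∫⁻ ω, ∏ j, (Ioc 0 t).indicator (fun s => ENNReal.ofReal (Y s ω)) (v j) ∂P ≤
      ENNReal.ofReal c * ∏ j, (Ioc 0 t).indicator (fun x => ENNReal.ofReal (x ^ (-a)))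
        (v j - prevVal v j) := by
  by_cases hall : ∀ j, v j ∈ Ioc 0 t
  · have hlt : ∀ j, prevVal v j < v j := prevVal_lt_of_strictMono hv fun j => (hall j).1
    have hinc : ∀ j, v j - prevVal v j ∈ Ioc 0 t := fun j =>
      ⟨sub_pos.2 (hlt j), by linarith [(hall j).2, prevVal_nonneg (fun i => (hall i).1.le) j]⟩
    simp only [indicator_of_mem (hall _), indicator_of_mem (hinc _)]
    rw [← ENNReal.ofReal_prod_of_nonneg fun j _ => Real.rpow_nonneg (hinc j).1.le _,
      ← ENNReal.ofReal_mul hc]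
    exact hmom v hlt fun j => (hall j).2
  · obtain ⟨j, hj⟩ := not_forall.1 hall
    have hzero : ∀ ω, ∏ i, (Ioc 0 t).indicator (fun s => ENNReal.ofReal (Y s ω)) (v i) = 0 :=
      fun ω => Finset.prod_eq_zero (Finset.mem_univ j) (indicator_of_notMem hj _)
    simp [hzero]

theorem factorial_mul_const_mul_pow_le {N : ℕ} (hN : 1 ≤ N) {H t A : ℝ} (hHN : H * N < 1)
    (ht : 0 ≤ t) (hA : 0 ≤ A) (n : ℕ) :
    (n.factorial : ℝ) * ((2 / Real.pi) ^ ((n : ℝ) * N / 2) * A ^ n) *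
        (t ^ (1 - H * N) / (1 - H * N)) ^ n ≤
      n.factorial * ((2 / Real.pi) ^ ((1 : ℝ) / 2) * (1 - H * N)⁻¹ * A) ^ n *
        t ^ ((1 - H * N) * n) := by
  have hπ : 0 < 2 / Real.pi := by positivity
  have hconst : (2 / Real.pi) ^ ((n : ℝ) * N / 2) ≤ ((2 / Real.pi) ^ ((1 : ℝ) / 2)) ^ n := by
    rw [← Real.rpow_mul_natCast hπ.le]
    refine Real.rpow_le_rpow_of_exponent_ge hπ ((div_le_one Real.pi_pos).2 Real.two_le_pi) ?_
    have : (1 : ℝ) ≤ N := by exact_mod_cast hN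
    nlinarith [(Nat.cast_nonneg n : (0 : ℝ) ≤ n)]
  calc (n.factorial : ℝ) * ((2 / Real.pi) ^ ((n : ℝ) * N / 2) * A ^ n) *
        (t ^ (1 - H * N) / (1 - H * N)) ^ n
      = n.factorial * (2 / Real.pi) ^ ((n : ℝ) * N / 2) *
          ((1 - H * N)⁻¹ * A) ^ n * t ^ ((1 - H * N) * n) := by
        rw [Real.rpow_mul_natCast ht]
        ring
    _ ≤ n.factorial * ((2 / Real.pi) ^ ((1 : ℝ) / 2)) ^ n *
          ((1 - H * N)⁻¹ * A) ^ n * t ^ ((1 - H * N) * n) := by gcongr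
    _ = _ := by ring

theorem stmt15_general (N : ℕ) (hN : 1 ≤ N) (H : ℝ) (hHN : H * N < 1)
    (t : ℝ) (ht : 0 < t)
    {Ω : Type*} [MeasurableSpace Ω] (P : Measure Ω) [IsProbabilityMeasure P]
    -- a jointly measurable process ξ
    (ξ : ℝ → Ω → EuclideanSpace ℝ (Fin N))
    (hξ : Measurable fun p : ℝ × Ω => ξ p.1 p.2)
    -- f ≥ 0 with finite L¹ norm
    (f : EuclideanSpace ℝ (Fin N) → ℝ) (hf0 : ∀ x, 0 ≤ f x) (hfm : Measurable f)
    -- the moment bound for the increment densities, for times in (0, t]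
    (hmom : ∀ (n : ℕ) (v : Fin n → ℝ), 0 < n →
      (∀ j, prevVal v j < v j) → (∀ j, v j ≤ t) →
      ∫⁻ ω, ∏ j, ENNReal.ofReal (f (ξ (v j) ω)) ∂P ≤
        ENNReal.ofReal ((2 / Real.pi) ^ ((n : ℝ) * N / 2) * (∫ x, f x) ^ n *
          ∏ j, (v j - prevVal v j) ^ (-(H * N)))) :
    -- conclusion: E[Z_t^n] ≤ n! C₃^n t^{(1-HN)n} with Z_t = ∫₀^t f(ξ_s) ds and
    -- C₃ = √(2/π) (1 - HN)⁻¹ ‖f‖₁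
    ∀ n : ℕ, 0 < n →
      ∫⁻ ω, (∫⁻ s in Ioc (0:ℝ) t, ENNReal.ofReal (f (ξ s ω))) ^ n ∂P ≤
        ENNReal.ofReal ((n.factorial : ℝ) *
          ((2 / Real.pi) ^ ((1:ℝ) / 2) * (1 - H * N)⁻¹ * (∫ x, f x)) ^ n *
          t ^ ((1 - H * N) * n)) := by
  intro n hn
  have hfI : 0 ≤ ∫ x, f x := integral_nonneg hf0
  have hK : Measurable ((Ioc 0 t).indicator fun x : ℝ => ENNReal.ofReal (x ^ (-(H * N)))) :=
    (ENNReal.measurable_ofReal.comp (measurable_id.pow_const _)).indicator measurableSet_Ioc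
  have hG : Measurable (Function.uncurry fun s ω =>
      (Ioc 0 t).indicator (fun s => ENNReal.ofReal (f (ξ s ω))) s) :=
    (ENNReal.measurable_ofReal.comp (hfm.comp hξ)).indicator (measurable_fst measurableSet_Ioc)
  have hmoment := lintegral_pow_lintegral_le_factorial_mul P hG hK _ fun v hv =>
    lintegral_prod_indicator_le_of_strictMono (by positivity) (fun v => hmom n v hn) hv
  simp only [lintegral_indicator measurableSet_Ioc, setLIntegral_Ioc_rpow_neg hHN ht.le] at hmoment
  refine hmoment.trans ?_
  rw [← ENNReal.ofReal_natCast, ← ENNReal.ofReal_pow (by positivity),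
    ← ENNReal.ofReal_mul (by positivity), ← ENNReal.ofReal_mul (by positivity)]
  exact ENNReal.ofReal_le_ofReal (factorial_mul_const_mul_pow_le hN hHN ht.le hfI n)

theorem stmt15 (N : ℕ) (hN : 1 ≤ N) (H : ℝ) (hH : 0 < H) (hHN : H * N < 1)
    (t : ℝ) (ht : 0 < t)
    {Ω : Type*} [MeasurableSpace Ω] (P : Measure Ω) [IsProbabilityMeasure P]
    -- a jointly measurable process ξ
    (ξ : ℝ → Ω → EuclideanSpace ℝ (Fin N))
    (hξ : Measurable fun p : ℝ × Ω => ξ p.1 p.2)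
    -- f ≥ 0 with finite L¹ norm
    (f : EuclideanSpace ℝ (Fin N) → ℝ) (hf0 : ∀ x, 0 ≤ f x) (hfm : Measurable f)
    (hf1 : Integrable f)
    -- the moment bound for the increment densities, for times in (0, t]
    (hmom : ∀ (n : ℕ) (v : Fin n → ℝ), 0 < n →
      (∀ j, prevVal v j < v j) → (∀ j, v j ≤ t) →
      ∫⁻ ω, ∏ j, ENNReal.ofReal (f (ξ (v j) ω)) ∂P ≤
        ENNReal.ofReal ((2 / Real.pi) ^ ((n : ℝ) * N / 2) * (∫ x, f x) ^ n *
          ∏ j, (v j - prevVal v j) ^ (-(H * N)))) :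
    -- conclusion: E[Z_t^n] ≤ n! C₃^n t^{(1-HN)n} with Z_t = ∫₀^t f(ξ_s) ds and
    -- C₃ = √(2/π) (1 - HN)⁻¹ ‖f‖₁
    ∀ n : ℕ, 0 < n →
      ∫⁻ ω, (∫⁻ s in Ioc (0:ℝ) t, ENNReal.ofReal (f (ξ s ω))) ^ n ∂P ≤
        ENNReal.ofReal ((n.factorial : ℝ) *
          ((2 / Real.pi) ^ ((1:ℝ) / 2) * (1 - H * N)⁻¹ * (∫ x, f x)) ^ n *
          t ^ ((1 - H * N) * n)) :=
  stmt15_general N hN H hHN t ht P ξ hξ f hf0 hfm hmom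
end
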